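/- Isolation Lemma (polynomial form): Let g₁,…,g_M : ℝⁿ → ℝ and ρ : ℝ → ℝⁿ be such that each f_i := g_i ∘ ρ is continuous, and define h(s) := {i | f_i(s) ≤ 0} ⊆ {1,…,M}. Let C := {i | ∃s∈[0,1], f_i(s)=0, and ∃s∈[0,1], f_i(s)≠0}. Suppose 0 ≤ a < s⋆ < b ≤ 1. Let P : ℝ → ℝ be continuous such that for every i ∈ C, every zero of f_i in [a,b] is a zero of P, and suppose {s ∈ [a,b] | P(s) = 0} = {s⋆}. If additionally each f_i for i ∉ C is either identically zero on [0,1] or never zero on [0,1], then h(s⋆) = h(a) ∪ {i | ∃ŝ ∈ (a,b), f_i(ŝ) = 0}. -/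
import Mathlib


open Set

private lemma sign_const {f : ℝ → ℝ} (hf : Continuous f) {a b x : ℝ}
    (hx : x ∈ Icc a b) (hnz : ∀ s ∈ Icc a b, f s ≠ 0) :
    (f x ≤ 0 ↔ f a ≤ 0) := by
  have haab : a ∈ Icc a b := ⟨le_refl a, hx.1.trans hx.2⟩
  constructor
  · intro hle
    by_contra hfa
    push_neg at hfa
    have : (0:ℝ) ∈ Icc (f x) (f a) := ⟨hle, hfa.le⟩
    obtain ⟨s, hs, h0⟩ := intermediate_value_Icc' hx.1 (hf.continuousOn) this
    exact hnz s ⟨hs.1, hs.2.trans hx.2⟩ h0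
  · intro hle
    by_contra hfx
    push_neg at hfx
    have : (0:ℝ) ∈ Icc (f a) (f x) := ⟨hle, hfx.le⟩
    obtain ⟨s, hs, h0⟩ := intermediate_value_Icc hx.1 (hf.continuousOn) this
    exact hnz s ⟨hs.1, hs.2.trans hx.2⟩ h0

/-- Isolation Lemma (polynomial form).  Let `f i := g i ∘ ρ` be continuous for each
`i`, `h s := {i | f i s ≤ 0}`, and let `C` be the set of indices whose `f i` both
vanishes somewhere and is nonzero somewhere on `[0,1]`.  Let `P` be continuous such
that every zero in `[a,b]` of an `f i` with `i ∈ C` is a zero of `P`, and suppose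
`0 ≤ a < s⋆ < b ≤ 1` with `{s ∈ [a,b] | P s = 0} = {s⋆}`.  If each `f i` with
`i ∉ C` is identically zero or never zero on `[0,1]`, then
`h s⋆ = h a ∪ {i | ∃ ŝ ∈ (a,b), f i ŝ = 0}`. -/
theorem stmt_16 {n M : ℕ} (g : Fin M → (Fin n → ℝ) → ℝ) (ρ : ℝ → (Fin n → ℝ))
    (f : Fin M → ℝ → ℝ) (hf : ∀ i, f i = g i ∘ ρ)
    (hfc : ∀ i, Continuous (f i))
    (h : ℝ → Set (Fin M)) (hh : ∀ s, h s = {i | f i s ≤ 0})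
    (C : Set (Fin M))
    (hC : C = {i | (∃ s ∈ Icc (0:ℝ) 1, f i s = 0) ∧ ∃ s ∈ Icc (0:ℝ) 1, f i s ≠ 0})
    (P : ℝ → ℝ) (hPc : Continuous P)
    (a b sstar : ℝ) (ha : 0 ≤ a) (h1 : a < sstar) (h2 : sstar < b) (hb : b ≤ 1)
    (hdiv : ∀ i ∈ C, ∀ s ∈ Icc a b, f i s = 0 → P s = 0)
    (hroot : {s ∈ Icc a b | P s = 0} = {sstar})
    (hnotC : ∀ i, i ∉ C →
      (∀ s ∈ Icc (0:ℝ) 1, f i s = 0) ∨ (∀ s ∈ Icc (0:ℝ) 1, f i s ≠ 0)) :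
    h sstar = h a ∪ {i | ∃ s ∈ Ioo a b, f i s = 0} := by
  have hab : a ≤ b := (h1.trans h2).le
  have hsab : sstar ∈ Icc a b := ⟨h1.le, h2.le⟩
  have hsub : Icc a b ⊆ Icc (0:ℝ) 1 := Icc_subset_Icc ha hb
  ext i
  simp only [hh, mem_union, mem_setOf_eq]
  have main : (∀ s ∈ Icc a b, f i s ≠ 0) →
      (f i sstar ≤ 0 ↔ f i a ≤ 0 ∨ ∃ s ∈ Ioo a b, f i s = 0) := by
    intro hnz
    have e := sign_const (hfc i) hsab hnz
    constructor
    · intro hle; exact Or.inl (e.mp hle)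
    · rintro (hle | ⟨s, hs, h0⟩)
      · exact e.mpr hle
      · exact absurd h0 (hnz s ⟨hs.1.le, hs.2.le⟩)
  by_cases hiC : i ∈ C
  · by_cases hz : f i sstar = 0
    · constructor
      · intro _; exact Or.inr ⟨sstar, ⟨h1, h2⟩, hz⟩
      · intro _; exact le_of_eq hz
    · apply main
      intro s hs h0
      have hP : P s = 0 := hdiv i hiC s hs h0
      have : s ∈ ({sstar} : Set ℝ) := by rw [← hroot]; exact ⟨hs, hP⟩
      rw [mem_singleton_iff] at this
      exact hz (this ▸ h0)
  · rcases hnotC i hiC with hall | hnone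
    · have h0s : f i sstar = 0 := hall sstar (hsub hsab)
      constructor
      · intro _; exact Or.inr ⟨sstar, ⟨h1, h2⟩, h0s⟩
      · intro _; exact le_of_eq h0s
    · exact main fun s hs => hnone s (hsub hs)
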